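/- Let k ≥ 2 be an integer and let S ⊆ V(H_k) be an inclusion-wise maximal stable set of H_k. Then exactly one of the following holds: (i) |S| = k, |S ∩ {j_0, j_1, j_2}| = 1 for every j ∈ {1,…,k}, and either S ∩ [k]_0 = ∅ or S ∩ [k]_2 = ∅; or (ii) |S| = k+1 and there exists j ∈ {1,…,k} such that S = ([k]_1 \ {j_1}) ∪ {j_0, j_2}. -/
import Mathlib


open Finset

noncomputable section

/-- `cone(P)`: the homogenization of `P`, indexed by `Option V` with `none` playing
the role of the `0` coordinate. -/
def lsCone {V : Type*} (P : Set (V → ℝ)) : Set (Option V → ℝ) :=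
  {y | ∃ (lam : ℝ) (x : V → ℝ), 0 ≤ lam ∧ x ∈ P ∧
    y = fun o => o.elim lam (fun v => lam * x v)}

/-- The lift `LŜ₊(P)`: symmetric PSD matrices `Y` indexed by `Option V`
with `Y e₀ = diag Y` and all columns conditions. -/
def lsLift {V : Type*} [Fintype V] [DecidableEq V] (P : Set (V → ℝ)) :
    Set (Matrix (Option V) (Option V) ℝ) :=
  {Y | Y.PosSemidef ∧ Y.mulVec (Pi.single none 1) = Matrix.diag Y ∧
      ∀ v : V, Y.mulVec (Pi.single (some v) 1) ∈ lsCone P ∧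
        Y.mulVec (Pi.single none 1 - Pi.single (some v) 1) ∈ lsCone P}

/-- The Lovász–Schrijver operator `LS₊`. -/
def lsPlus {V : Type*} [Fintype V] [DecidableEq V] (P : Set (V → ℝ)) : Set (V → ℝ) :=
  {x | ∃ Y ∈ lsLift P, Y.mulVec (Pi.single none 1) = fun o => o.elim 1 x}

/-- The fractional stable set polytope. -/
def FRAC {V : Type*} (G : SimpleGraph V) : Set (V → ℝ) :=
  {x | (∀ v, 0 ≤ x v ∧ x v ≤ 1) ∧ ∀ u v, G.Adj u v → x u + x v ≤ 1}

/-- The stable set polytope: convex hull of incidence vectors of stable sets. -/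
def STAB {V : Type*} (G : SimpleGraph V) : Set (V → ℝ) :=
  convexHull ℝ {x | ∃ S : Set V, (∀ u ∈ S, ∀ v ∈ S, ¬ G.Adj u v) ∧
    x = S.indicator fun _ => (1 : ℝ)}

/-- The graph `H_k`, on vertex set `Fin k × Fin 3` (vertex `i_p` is `(i, p)`). -/
def Hgraph (k : ℕ) : SimpleGraph (Fin k × Fin 3) :=
  SimpleGraph.fromRel (fun a b =>
    (a.1 = b.1 ∧ ((a.2 = 0 ∧ b.2 = 1) ∨ (a.2 = 1 ∧ b.2 = 2))) ∨
    (a.1 ≠ b.1 ∧ a.2 = 0 ∧ b.2 = 2))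

/-- The vector `w_k(a,b)`: entry `a` on `[k]₀ ∪ [k]₂` and `b` on `[k]₁`. -/
def wVec (k : ℕ) (a b : ℝ) : Fin k × Fin 3 → ℝ := fun v => if v.2 = 1 then b else a

lemma fin3cases (p : Fin 3) : p = 0 ∨ p = 1 ∨ p = 2 := by omega

lemma adj_char {k : ℕ} (a b : Fin k × Fin 3) :
    (Hgraph k).Adj a b ↔
      (a.1 = b.1 ∧ ((a.2 = 0 ∧ b.2 = 1) ∨ (a.2 = 1 ∧ b.2 = 0) ∨
        (a.2 = 1 ∧ b.2 = 2) ∨ (a.2 = 2 ∧ b.2 = 1))) ∨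
      (a.1 ≠ b.1 ∧ ((a.2 = 0 ∧ b.2 = 2) ∨ (a.2 = 2 ∧ b.2 = 0))) := by
  obtain ⟨a1, a2⟩ := a
  obtain ⟨b1, b2⟩ := b
  fin_cases a2 <;> fin_cases b2 <;>
    simp [Hgraph, SimpleGraph.fromRel_adj, Prod.ext_iff] <;> tauto


theorem Hk_maximal_stable_sets (k : ℕ) (hk : 2 ≤ k) (S : Finset (Fin k × Fin 3))
    (hstab : ∀ u ∈ S, ∀ v ∈ S, ¬ (Hgraph k).Adj u v)
    (hmax : ∀ T : Finset (Fin k × Fin 3),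
      (∀ u ∈ T, ∀ v ∈ T, ¬ (Hgraph k).Adj u v) → S ⊆ T → S = T) :
    Xor'
      (S.card = k ∧ (∀ j : Fin k, (S.filter fun v => v.1 = j).card = 1) ∧
        ((∀ v ∈ S, v.2 ≠ 0) ∨ (∀ v ∈ S, v.2 ≠ 2)))
      (S.card = k + 1 ∧ ∃ j : Fin k, ∀ v : Fin k × Fin 3,
        v ∈ S ↔ ((v.2 = 1 ∧ v.1 ≠ j) ∨ v = (j, 0) ∨ v = (j, 2))) := by
  classical
  have hmax' : ∀ v : Fin k × Fin 3, v ∉ S → ∃ u ∈ S, (Hgraph k).Adj v u := by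
    intro v hv
    by_contra h
    push_neg at h
    have hstab' : ∀ u ∈ insert v S, ∀ w ∈ insert v S, ¬ (Hgraph k).Adj u w := by
      intro u hu w hw
      simp only [Finset.mem_insert] at hu hw
      rcases hu with rfl | hu <;> rcases hw with rfl | hw
      · exact (Hgraph k).irrefl
      · exact h w hw
      · intro hadj; exact h u hu hadj.symm
      · exact hstab u hu w hw
    have := hmax _ hstab' (Finset.subset_insert _ _)
    exact hv (this ▸ Finset.mem_insert_self v S)
  by_cases hA : ∃ i : Fin k, (i, (0:Fin 3)) ∈ S ∧ (i, (2:Fin 3)) ∈ S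
  · obtain ⟨i, h0, h2⟩ := hA
    have f0 : ∀ v ∈ S, v.2 = 0 → v = (i, 0) := by
      intro v hv hv0
      by_cases hvi : v.1 = i
      · exact Prod.ext hvi hv0
      · exact absurd ((adj_char v (i,2)).mpr (by simp [hvi, hv0])) (hstab v hv _ h2)
    have f2 : ∀ v ∈ S, v.2 = 2 → v = (i, 2) := by
      intro v hv hv2
      by_cases hvi : v.1 = i
      · exact Prod.ext hvi hv2
      · exact absurd ((adj_char v (i,0)).mpr (by simp [hvi, hv2])) (hstab v hv _ h0)
    have f1 : ∀ v ∈ S, v.2 = 1 → v.1 ≠ i := by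
      intro v hv hv1 hvi
      exact absurd ((adj_char v (i,0)).mpr (by simp [hvi, hv1])) (hstab v hv _ h0)
    have hiff : ∀ v : Fin k × Fin 3,
        v ∈ S ↔ ((v.2 = 1 ∧ v.1 ≠ i) ∨ v = (i, 0) ∨ v = (i, 2)) := by
      intro v
      constructor
      · intro hv
        rcases fin3cases v.2 with h | h | h
        · exact Or.inr (Or.inl (f0 v hv h))
        · exact Or.inl ⟨h, f1 v hv h⟩
        · exact Or.inr (Or.inr (f2 v hv h))
      · rintro (⟨h1, hne⟩ | rfl | rfl)
        · by_contra hv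
          obtain ⟨u, hu, hadj⟩ := hmax' v hv
          rw [adj_char] at hadj
          rcases fin3cases u.2 with h | h | h
          · obtain rfl := f0 u hu h
            simp [h1] at hadj
            exact hne hadj
          · simp [h1, h] at hadj
          · obtain rfl := f2 u hu h
            simp [h1] at hadj
            exact hne hadj
        · exact h0
        · exact h2
    have hSeq : S = insert (i, (0:Fin 3)) (insert (i, (2:Fin 3))
        ((Finset.univ.erase i).image fun j => (j, (1:Fin 3)))) := by
      ext v
      simp only [Finset.mem_insert, Finset.mem_image, Finset.mem_erase, Finset.mem_univ,
        and_true]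
      rw [hiff]
      constructor
      · rintro (⟨h1, hne⟩ | rfl | rfl)
        · exact Or.inr (Or.inr ⟨v.1, hne, Prod.ext rfl h1.symm⟩)
        · exact Or.inl rfl
        · exact Or.inr (Or.inl rfl)
      · rintro (rfl | rfl | ⟨j, hj, rfl⟩)
        · exact Or.inr (Or.inl rfl)
        · exact Or.inr (Or.inr rfl)
        · exact Or.inl ⟨rfl, hj⟩
    have hcard : S.card = k + 1 := by
      rw [hSeq]
      rw [Finset.card_insert_of_notMem (by simp), Finset.card_insert_of_notMem (by simp),
        Finset.card_image_of_injective _ (fun a b hab => (Prod.mk.injEq .. ▸ hab).1),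
        Finset.card_erase_of_mem (Finset.mem_univ i), Finset.card_univ, Fintype.card_fin]
      omega
    refine Or.inr ⟨⟨hcard, i, hiff⟩, ?_⟩
    rintro ⟨hc, -⟩
    omega
  · push_neg at hA
    have col : ∀ j : Fin k, ∀ v ∈ S, ∀ w ∈ S, v.1 = j → w.1 = j → v = w := by
      intro j v hv w hw hvj hwj
      obtain ⟨v1, v2⟩ := v; obtain ⟨w1, w2⟩ := w
      simp only at hvj hwj
      subst hvj; subst hwj
      rcases fin3cases v2 with rfl | rfl | rfl <;> rcases fin3cases w2 with rfl | rfl | rfl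
      · rfl
      · exact absurd ((adj_char _ _).mpr (by simp)) (hstab _ hv _ hw)
      · exact absurd hw (hA w1 hv)
      · exact absurd ((adj_char _ _).mpr (by simp)) (hstab _ hv _ hw)
      · rfl
      · exact absurd ((adj_char _ _).mpr (by simp)) (hstab _ hv _ hw)
      · exact absurd hv (hA w1 hw)
      · exact absurd ((adj_char _ _).mpr (by simp)) (hstab _ hv _ hw)
      · rfl
    have colne : ∀ j : Fin k, ∃ v ∈ S, v.1 = j := by
      intro j
      by_contra h
      push_neg at h
      have hj1 : ((j, (1:Fin 3))) ∉ S := fun hm => h _ hm rfl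
      obtain ⟨u, hu, hadj⟩ := hmax' _ hj1
      rw [adj_char] at hadj
      rcases hadj with ⟨heq, -⟩ | ⟨-, hc⟩
      · exact h u hu heq.symm
      · simp at hc
    have hfil : ∀ j : Fin k, (S.filter fun v => v.1 = j).card = 1 := by
      intro j
      obtain ⟨v, hv, hvj⟩ := colne j
      rw [Finset.card_eq_one]
      exact ⟨v, Finset.eq_singleton_iff_unique_mem.mpr
        ⟨Finset.mem_filter.mpr ⟨hv, hvj⟩,
         fun w hw => by
          obtain ⟨hw1, hw2⟩ := Finset.mem_filter.mp hw
          exact col j w hw1 v hv hw2 hvj⟩⟩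
    have hcard : S.card = k := by
      rw [Finset.card_eq_sum_card_fiberwise (f := Prod.fst) (t := Finset.univ)
        (fun x _ => Finset.mem_univ _)]
      simp [hfil]
    have hside : (∀ v ∈ S, v.2 ≠ 0) ∨ (∀ v ∈ S, v.2 ≠ 2) := by
      by_cases h0 : ∃ v ∈ S, v.2 = 0
      · obtain ⟨v, hv, hv0⟩ := h0
        refine Or.inr fun w hw hw2 => ?_
        by_cases hvw : v.1 = w.1
        · have h1' : v = (w.1, 0) := Prod.ext hvw hv0
          have h2' : w = (w.1, 2) := Prod.ext rfl hw2
          rw [h1'] at hv; rw [h2'] at hw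
          exact hA w.1 hv hw
        · exact absurd ((adj_char v w).mpr (by simp [hvw, hv0, hw2])) (hstab v hv w hw)
      · push_neg at h0
        exact Or.inl h0
    refine Or.inl ⟨⟨hcard, hfil, hside⟩, ?_⟩
    rintro ⟨hc, -⟩
    omega
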